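/- Let μ ∈ [0, 1/2], h ∈ ℝ, m₀ = √(2(1−μ)), and let F_μ be the vector field of the McGehee-regularized collision problem in coordinates (s, θ, α) restricted to the energy manifold. Then for every θ̄ ∈ ℝ the points S⁺_θ̄ = (0, θ̄, π/2) and S⁻_θ̄ = (0, θ̄, −π/2) are equilibrium points of F_μ, and the Jacobian matrices are DF_μ(S^±_θ̄) = [[±m₀/2, 0, 0], [0, 0, ∓m₀], [0, 0, ∓m₀/2]] (rows and columns ordered (s, θ, α)); in particular the eigenvalues of DF_μ(S^±_θ̄) are ±m₀/2, 0, and ∓m₀/2, so the circles of equilibria S^± = {S^±_θ̄ : θ̄ ∈ 𝕋} are normally hyperbolic. -/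

import Mathlib

open Real Filter
open scoped Topology

/-- The function `ρ(s,θ)` determined by the energy relation on the energy-`h` manifold of the
McGehee-regularized collision problem. -/
noncomputable def rhoFun (μ h s θ : ℝ) : ℝ :=
  2 * s ^ 2 * h + s ^ 6 -
    2 * μ * s ^ 2 *
      (-μ / 2 + s ^ 2 * Real.cos θ -
        (1 + s ^ 4 - 2 * s ^ 2 * Real.cos θ) ^ (-(1 / 2) : ℝ))

/-- Partial derivative `∂_s ρ`. -/
noncomputable def rhoS (μ h s θ : ℝ) : ℝ := deriv (fun s' => rhoFun μ h s' θ) s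

/-- Partial derivative `∂_θ ρ`. -/
noncomputable def rhoTheta (μ h s θ : ℝ) : ℝ := deriv (fun θ' => rhoFun μ h s θ') θ

/-- Abbreviation for `√(2(1-μ)+ρ(s,θ))`. -/
noncomputable def mFun (μ h s θ : ℝ) : ℝ := Real.sqrt (2 * (1 - μ) + rhoFun μ h s θ)

/-- The vector field of the McGehee-regularized collision problem in coordinates
`(s,θ,α)` restricted to the energy-`h` manifold. -/
noncomputable def Fvec (μ h : ℝ) (x : ℝ × ℝ × ℝ) : ℝ × ℝ × ℝ :=
  (x.1 / 2 * mFun μ h x.1 x.2.1 * Real.sin x.2.2,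
   mFun μ h x.1 x.2.1 * Real.cos x.2.2,
   (rhoS μ h x.1 x.2.1 * (x.1 / 2 * mFun μ h x.1 x.2.1 * Real.sin x.2.2)
      + rhoTheta μ h x.1 x.2.1 * (mFun μ h x.1 x.2.1 * Real.cos x.2.2))
     / (2 * (2 * (1 - μ) + rhoFun μ h x.1 x.2.1) * Real.tan x.2.2)
   + mFun μ h x.1 x.2.1 / 2 * Real.cos x.2.2 + 2 * x.1 ^ 3
   - μ * x.1 ^ 4 * Real.sin x.2.1 *
       (1 - (1 + x.1 ^ 4 - 2 * x.1 ^ 2 * Real.cos x.2.1) ^ (-(3 / 2) : ℝ))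
     / (mFun μ h x.1 x.2.1 * Real.sin x.2.2))

/-- The linear map `(v₁,v₂,v₃) ↦ (a v₁, b v₃, c v₃)`, i.e. the matrix
`[[a,0,0],[0,0,b],[0,0,c]]` in coordinates `(s,θ,α)`. -/
noncomputable def Lmat (a b c : ℝ) : (ℝ × ℝ × ℝ) →L[ℝ] ℝ × ℝ × ℝ :=
  (a • ContinuousLinearMap.fst ℝ ℝ (ℝ × ℝ)).prod
    ((b • ((ContinuousLinearMap.snd ℝ ℝ ℝ).comp (ContinuousLinearMap.snd ℝ ℝ (ℝ × ℝ)))).prod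
      (c • ((ContinuousLinearMap.snd ℝ ℝ ℝ).comp (ContinuousLinearMap.snd ℝ ℝ (ℝ × ℝ)))))

/-!
At a point `(0, θ, α)` with `cos α = 0`, every component of `F_μ` is a sum of terms `s · g` and
`cos α · g` with `g` merely continuous there: the `tan α` in the denominator of `F_α` becomes a
factor `cos α`, and `∂_s ρ`, `∂_θ ρ` are continuous near `s = 0` because `ρ` is smooth there.
The product of a differentiable function vanishing at a point with a function continuous there
is differentiable at that point, so the Jacobian is read off from the values of the `g`'s at
`s = 0`, where `ρ = 0` and `√(2(1-μ)+ρ) = m₀`. The eigenvectors of the resulting matrix are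
explicit.
-/

open Asymptotics Function

theorem HasFDerivAt.mul_continuousAt_of_eq_zero {𝕜 E : Type*} [NontriviallyNormedField 𝕜]
    [NormedAddCommGroup E] [NormedSpace 𝕜 E] {f g : E → 𝕜} {f' : E →L[𝕜] 𝕜} {x : E}
    (hf : HasFDerivAt f f' x) (hfx : f x = 0) (hg : ContinuousAt g x) :
    HasFDerivAt (fun y => f y * g y) (g x • f') x := by
  refine .of_isLittleO ?_
  have hsplit : (fun y => f y * g y - f x * g x - (g x • f') (y - x)) =
      fun y => (f y - f x - f' (y - x)) * g y + f' (y - x) * (g y - g x) := by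
    funext y
    simp only [hfx, FunLike.coe_smul, Pi.smul_apply, smul_eq_mul]
    ring
  rw [hsplit, ← isLittleO_norm_right]
  have hg1 : (fun y => g y - g x) =o[𝓝 x] fun _ => (1 : ℝ) :=
    (isLittleO_one_iff ℝ).2 (tendsto_sub_nhds_zero_iff.2 hg.tendsto)
  simpa using (hf.isLittleO.norm_right.mul_isBigO (hg.norm.isBoundedUnder_le.isBigO_one ℝ)).add
    ((f'.isBigO_sub _ x).norm_right.mul_isLittleO hg1)

section PartialDeriv

variable {𝕜 F : Type*} [NontriviallyNormedField 𝕜] [NormedAddCommGroup F] [NormedSpace 𝕜 F]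
  {f : 𝕜 → 𝕜 → F} {z : 𝕜 × 𝕜}

theorem ContDiffAt.continuousAt_deriv_uncurry_left (hf : ContDiffAt 𝕜 1 (uncurry f) z) :
    ContinuousAt (fun w : 𝕜 × 𝕜 => deriv (fun t => f t w.2) w.1) z := by
  have hev : ∀ᶠ w in 𝓝 z, fderiv 𝕜 (uncurry f) w (1, 0) = deriv (fun t => f t w.2) w.1 := by
    filter_upwards [hf.eventually (by simp)] with w hw
    exact ((hw.differentiableAt one_ne_zero).hasFDerivAt.comp_hasDerivAt w.1
      ((hasDerivAt_id w.1).prodMk (hasDerivAt_const w.1 w.2))).deriv.symm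
  exact ((hf.continuousAt_fderiv one_ne_zero).clm_apply continuousAt_const).congr hev

theorem ContDiffAt.continuousAt_deriv_uncurry_right (hf : ContDiffAt 𝕜 1 (uncurry f) z) :
    ContinuousAt (fun w : 𝕜 × 𝕜 => deriv (fun t => f w.1 t) w.2) z := by
  have hev : ∀ᶠ w in 𝓝 z, fderiv 𝕜 (uncurry f) w (0, 1) = deriv (fun t => f w.1 t) w.2 := by
    filter_upwards [hf.eventually (by simp)] with w hw
    exact ((hw.differentiableAt one_ne_zero).hasFDerivAt.comp_hasDerivAt w.2
      ((hasDerivAt_const w.2 w.1).prodMk (hasDerivAt_id w.2))).deriv.symm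
  exact ((hf.continuousAt_fderiv one_ne_zero).clm_apply continuousAt_const).congr hev

end PartialDeriv

theorem contDiffAt_rhoFun {n : WithTop ℕ∞} (μ h : ℝ) {s θ : ℝ}
    (hs : 1 + s ^ 4 - 2 * s ^ 2 * Real.cos θ ≠ 0) :
    ContDiffAt ℝ n (uncurry (rhoFun μ h)) (s, θ) := by
  unfold uncurry rhoFun
  have hbase : ContDiffAt ℝ n (fun z : ℝ × ℝ => (1 + z.1 ^ 4 - 2 * z.1 ^ 2 * Real.cos z.2)
      ^ (-(1 / 2) : ℝ)) (s, θ) :=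
    ContDiffAt.rpow_const_of_ne (by fun_prop) hs
  fun_prop

theorem ContinuousAt.comp_fst_sndFst {φ : ℝ → ℝ → ℝ} {x : ℝ × ℝ × ℝ}
    (hφ : ContinuousAt (uncurry φ) (x.1, x.2.1)) :
    ContinuousAt (fun y : ℝ × ℝ × ℝ => φ y.1 y.2.1) x :=
  hφ.comp (f := fun y : ℝ × ℝ × ℝ => (y.1, y.2.1)) (by fun_prop)

section Collision

variable {μ h : ℝ}

theorem rhoFun_zero_left (θ : ℝ) : rhoFun μ h 0 θ = 0 := by simp [rhoFun]

theorem mFun_zero_left (θ : ℝ) : mFun μ h 0 θ = √(2 * (1 - μ)) := by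
  simp [mFun, rhoFun_zero_left]

theorem Fvec_eq_zero (θ : ℝ) {α : ℝ} (hα : Real.cos α = 0) : Fvec μ h (0, θ, α) = 0 := by
  simp [Fvec, hα]

theorem continuousAt_rhoFun (θ α : ℝ) :
    ContinuousAt (fun x : ℝ × ℝ × ℝ => rhoFun μ h x.1 x.2.1) (0, θ, α) :=
  .comp_fst_sndFst (contDiffAt_rhoFun (n := 0) μ h (by norm_num)).continuousAt

theorem continuousAt_rhoS (θ α : ℝ) :
    ContinuousAt (fun x : ℝ × ℝ × ℝ => rhoS μ h x.1 x.2.1) (0, θ, α) :=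
  .comp_fst_sndFst (contDiffAt_rhoFun μ h (by norm_num)).continuousAt_deriv_uncurry_left

theorem continuousAt_rhoTheta (θ α : ℝ) :
    ContinuousAt (fun x : ℝ × ℝ × ℝ => rhoTheta μ h x.1 x.2.1) (0, θ, α) :=
  .comp_fst_sndFst (contDiffAt_rhoFun μ h (by norm_num)).continuousAt_deriv_uncurry_right

theorem continuousAt_mFun (θ α : ℝ) :
    ContinuousAt (fun x : ℝ × ℝ × ℝ => mFun μ h x.1 x.2.1) (0, θ, α) :=
  ((continuousAt_rhoFun θ α).const_add _).sqrt

theorem hasFDerivAt_Fvec (hμ : μ < 1) (θ : ℝ) {α : ℝ} (hcos : Real.cos α = 0)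
    (hsin : Real.sin α ≠ 0) :
    HasFDerivAt (Fvec μ h)
      (Lmat (Real.sin α * √(2 * (1 - μ)) / 2) (-(Real.sin α * √(2 * (1 - μ))))
        (-(Real.sin α * √(2 * (1 - μ)) / 2))) (0, θ, α) := by
  have hm₀ : 0 < √(2 * (1 - μ)) := Real.sqrt_pos.2 (by linarith)
  have hs : HasFDerivAt (fun x : ℝ × ℝ × ℝ => x.1)
      (ContinuousLinearMap.fst ℝ ℝ (ℝ × ℝ)) (0, θ, α) :=
    hasFDerivAt_fst
  have hc : HasFDerivAt (fun x : ℝ × ℝ × ℝ => Real.cos x.2.2) ((-Real.sin α) •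
      (ContinuousLinearMap.snd ℝ ℝ ℝ).comp (ContinuousLinearMap.snd ℝ ℝ (ℝ × ℝ))) (0, θ, α) :=
    (Real.hasDerivAt_cos α).comp_hasFDerivAt (f := fun x : ℝ × ℝ × ℝ => x.2.2)
      (0, θ, α) hasFDerivAt_snd.snd
  have hM := continuousAt_mFun (μ := μ) (h := h) θ α
  have hρ := continuousAt_rhoFun (μ := μ) (h := h) θ α
  have hρS := continuousAt_rhoS (μ := μ) (h := h) θ α
  have hρΘ := continuousAt_rhoTheta (μ := μ) (h := h) θ α
  have hK : 2 * (2 * (1 - μ) + rhoFun μ h 0 θ) * Real.sin α ≠ 0 := by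
    rw [rhoFun_zero_left]; exact mul_ne_zero (by linarith) hsin
  have hMs : mFun μ h 0 θ * Real.sin α ≠ 0 := by
    rw [mFun_zero_left]; exact mul_ne_zero hm₀.ne' hsin
  have hg₁ : ContinuousAt (fun x : ℝ × ℝ × ℝ => mFun μ h x.1 x.2.1 * Real.sin x.2.2 / 2)
      (0, θ, α) := by fun_prop
  have hg₃ : ContinuousAt (fun x : ℝ × ℝ × ℝ =>
      (rhoS μ h x.1 x.2.1 * (x.1 / 2 * mFun μ h x.1 x.2.1 * Real.sin x.2.2)
        + rhoTheta μ h x.1 x.2.1 * (mFun μ h x.1 x.2.1 * Real.cos x.2.2))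
        / (2 * (2 * (1 - μ) + rhoFun μ h x.1 x.2.1) * Real.sin x.2.2)
      + mFun μ h x.1 x.2.1 / 2) (0, θ, α) := by
    fun_prop (disch := exact hK)
  have hg₄ : ContinuousAt (fun x : ℝ × ℝ × ℝ => 2 * x.1 ^ 2 - μ * x.1 ^ 3 * Real.sin x.2.1 *
      (1 - (1 + x.1 ^ 4 - 2 * x.1 ^ 2 * Real.cos x.2.1) ^ (-(3 / 2) : ℝ))
      / (mFun μ h x.1 x.2.1 * Real.sin x.2.2)) (0, θ, α) := by
    fun_prop (disch := first | exact hMs | norm_num)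
  have h₁ := hs.mul_continuousAt_of_eq_zero rfl hg₁
  have h₂ := hc.mul_continuousAt_of_eq_zero hcos hM
  have h₃ := (hc.mul_continuousAt_of_eq_zero hcos hg₃).add
    (hs.mul_continuousAt_of_eq_zero rfl hg₄)
  refine ((h₁.prodMk (h₂.prodMk h₃)).congr_fderiv ?_).congr_of_eventuallyEq
    (.of_forall fun x => ?_)
  · ext <;> simp [Lmat, mFun_zero_left, rhoFun_zero_left, hcos] <;> ring
  · simp only [Fvec, Pi.add_apply, Prod.mk.injEq]
    refine ⟨by ring, by ring, ?_⟩
    -- `y / (k * tan α) = y * cos α / (k * sin α)` also where `cos α = 0`: both sides are junk `0`.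
    rw [Real.tan_eq_sin_div_cos, ← mul_div_assoc, div_div_eq_mul_div]
    ring

end Collision

theorem Lmat_apply (a b c : ℝ) (v : ℝ × ℝ × ℝ) :
    Lmat a b c v = (a * v.1, b * v.2.2, c * v.2.2) := by
  simp [Lmat]

theorem hasEigenvalue_Lmat_fst (a b c : ℝ) :
    Module.End.HasEigenvalue (Lmat a b c).toLinearMap a :=
  Module.End.hasEigenvalue_of_hasEigenvector (x := (1, 0, 0))
    ⟨Module.End.mem_eigenspace_iff.2 (by simp [Lmat_apply]), by simp⟩

theorem hasEigenvalue_Lmat_zero (a b c : ℝ) :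
    Module.End.HasEigenvalue (Lmat a b c).toLinearMap 0 :=
  Module.End.hasEigenvalue_of_hasEigenvector (x := (0, 1, 0))
    ⟨Module.End.mem_eigenspace_iff.2 (by simp [Lmat_apply]), by simp⟩

theorem hasEigenvalue_Lmat_of_ne_zero (a b : ℝ) {c : ℝ} (hc : c ≠ 0) :
    Module.End.HasEigenvalue (Lmat a b c).toLinearMap c :=
  Module.End.hasEigenvalue_of_hasEigenvector (x := (0, b / c, 1))
    ⟨Module.End.mem_eigenspace_iff.2 (by simp [Lmat_apply, mul_div_cancel₀ _ hc]), by simp⟩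

/-- For every `μ ∈ [0,1/2]`, `h ∈ ℝ` and `θ̄ ∈ ℝ`, the points `S^±_θ̄ = (0, θ̄, ±π/2)` are
equilibria of the McGehee-regularized vector field `F_μ`, and its Jacobian there is the
matrix `[[±m₀/2,0,0],[0,0,∓m₀],[0,0,∓m₀/2]]` with `m₀ = √(2(1-μ))`; in particular the
eigenvalues of the Jacobian are `±m₀/2`, `0` and `∓m₀/2`. -/
theorem collision_circles_equilibria_jacobian
    (μ h : ℝ) (hμ : μ ∈ Set.Icc (0 : ℝ) (1 / 2)) (θb : ℝ) :
    Fvec μ h (0, θb, π / 2) = 0 ∧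
    Fvec μ h (0, θb, -(π / 2)) = 0 ∧
    HasFDerivAt (Fvec μ h)
      (Lmat (Real.sqrt (2 * (1 - μ)) / 2) (-Real.sqrt (2 * (1 - μ)))
        (-(Real.sqrt (2 * (1 - μ)) / 2))) (0, θb, π / 2) ∧
    HasFDerivAt (Fvec μ h)
      (Lmat (-(Real.sqrt (2 * (1 - μ)) / 2)) (Real.sqrt (2 * (1 - μ)))
        (Real.sqrt (2 * (1 - μ)) / 2)) (0, θb, -(π / 2)) ∧
    Module.End.HasEigenvalue
      (Lmat (Real.sqrt (2 * (1 - μ)) / 2) (-Real.sqrt (2 * (1 - μ)))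
        (-(Real.sqrt (2 * (1 - μ)) / 2))).toLinearMap (Real.sqrt (2 * (1 - μ)) / 2) ∧
    Module.End.HasEigenvalue
      (Lmat (Real.sqrt (2 * (1 - μ)) / 2) (-Real.sqrt (2 * (1 - μ)))
        (-(Real.sqrt (2 * (1 - μ)) / 2))).toLinearMap 0 ∧
    Module.End.HasEigenvalue
      (Lmat (Real.sqrt (2 * (1 - μ)) / 2) (-Real.sqrt (2 * (1 - μ)))
        (-(Real.sqrt (2 * (1 - μ)) / 2))).toLinearMap (-(Real.sqrt (2 * (1 - μ)) / 2)) ∧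
    Module.End.HasEigenvalue
      (Lmat (-(Real.sqrt (2 * (1 - μ)) / 2)) (Real.sqrt (2 * (1 - μ)))
        (Real.sqrt (2 * (1 - μ)) / 2)).toLinearMap (-(Real.sqrt (2 * (1 - μ)) / 2)) ∧
    Module.End.HasEigenvalue
      (Lmat (-(Real.sqrt (2 * (1 - μ)) / 2)) (Real.sqrt (2 * (1 - μ)))
        (Real.sqrt (2 * (1 - μ)) / 2)).toLinearMap 0 ∧
    Module.End.HasEigenvalue
      (Lmat (-(Real.sqrt (2 * (1 - μ)) / 2)) (Real.sqrt (2 * (1 - μ)))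
        (Real.sqrt (2 * (1 - μ)) / 2)).toLinearMap (Real.sqrt (2 * (1 - μ)) / 2) := by
  have hμ₁ : μ < 1 := by linarith [hμ.2]
  have hm₀ : 0 < √(2 * (1 - μ)) := Real.sqrt_pos.2 (by linarith)
  refine ⟨Fvec_eq_zero θb (by simp), Fvec_eq_zero θb (by simp), ?_, ?_,
    hasEigenvalue_Lmat_fst _ _ _, hasEigenvalue_Lmat_zero _ _ _,
    hasEigenvalue_Lmat_of_ne_zero _ _ ?_, hasEigenvalue_Lmat_fst _ _ _,
    hasEigenvalue_Lmat_zero _ _ _, hasEigenvalue_Lmat_of_ne_zero _ _ ?_⟩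
  · simpa using hasFDerivAt_Fvec (h := h) hμ₁ θb (α := π / 2) (by simp) (by simp)
  · simpa [neg_div] using
      hasFDerivAt_Fvec (h := h) hμ₁ θb (α := -(π / 2)) (by simp) (by simp)
  · exact neg_ne_zero.2 (div_ne_zero hm₀.ne' two_ne_zero)
  · exact div_ne_zero hm₀.ne' two_ne_zero
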